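/- arXiv:2002.12131 — 4 statements merged into one kernel-verified Lean document; each statement's English description precedes it below -/
import Mathlib

section
/- Let G be a group with two binary operations · and : satisfying b:a = (a·b)ab⁻¹ for all a, b ∈ G. Then for all a, b, c ∈ G, the equality (ab):c = a:(b:c) holds if and only if c·(ab) = ((b:c)·a)(c·b). -/
/-- If `b:a = (a·b)ab⁻¹`, then `(ab):c = a:(b:c)` iff `c·(ab) = ((b:c)·a)(c·b)`. -/
theorem stmt_3 {G : Type*} [Group G] (dot col : G → G → G)
    (h : ∀ a b : G, col b a = dot a b * a * b⁻¹) :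
    ∀ a b c : G,
      col (a * b) c = col a (col b c) ↔ dot c (a * b) = dot (col b c) a * dot c b := by
  intro a b c
  rw [h, h, h c b]
  conv_rhs => rw [← mul_left_inj (c * b⁻¹ * a⁻¹)]
  rw [mul_inv_rev]
  simp only [mul_assoc]
end

section
/- Let G be a group with two binary operations · and : satisfying a·b = (b:a)ba⁻¹ for all a, b ∈ G. Then for all a, b, c ∈ G, the equality (ab)·c = a·(b·c) holds if and only if c:(ab) = ((b·c):a)(c:b). -/
/-- If `a·b = (b:a)ba⁻¹`, then `(ab)·c = a·(b·c)` iff `c:(ab) = ((b·c):a)(c:b)`. -/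
theorem stmt_4 {G : Type*} [Group G] (dot col : G → G → G)
    (h : ∀ a b : G, dot a b = col b a * b * a⁻¹) :
    ∀ a b c : G,
      dot (a * b) c = dot a (dot b c) ↔ col c (a * b) = col (dot b c) a * col c b := by
  intro a b c
  rw [h (a*b) c, h a (dot b c), h b c]
  constructor
  · intro hx
    have hx2 : col c (a * b) * (c * (a*b)⁻¹) = col (col c b * c * b⁻¹) a * col c b * (c * (a*b)⁻¹) := by
      rw [← mul_assoc, hx]; group
    exact mul_right_cancel hx2
  · intro hx
    rw [hx]; group
end

section
/- Let G be a group, S ⊆ G a generating set, and · and : two binary operations on G such that: (i) (gh)·c = g·(h·c), (gh):c = g:(h:c), 1·c = c, 1:c = c for all g, h, c ∈ G; (ii) x·(ab) = ((b:x)·a)(x·b) and x:(ab) = ((b·x):a)(x:b) for all x ∈ S and a, b ∈ G. Then a·(bc) = ((c:a)·b)(a·c) and a:(bc) = ((c·a):b)(a:c) for all a, b, c ∈ G. -/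
/-!
Write `a = x * k` with `x ∈ S`. Since `·` is an action, `a · (b c) = x · (k · (b c))`, and expanding
first at `k`, then at `x`, leaves the factor `(k · c) : x * (c : k)`, which is the `:`-identity at
first argument `c` for the product `x * k`. Hence the two identities are proved together by induction
on the total `S`-word length of `a` and `c`; the case `a = 1` needs `c : 1 = 1`, which holds because
`x · 1 = ((1 : x) · 1) (x · 1)` forces `x · 1 = 1` on generators.
-/

section

variable {G : Type*}

def CocycleAt [Mul G] (dot col : G → G → G) (a b c : G) : Prop :=
  dot a (b * c) = dot (col c a) b * dot a c

theorem act_one_eq_one_of_mem_closure [LeftCancelMonoid G] {dot col : G → G → G} {S : Set G}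
    (hdot1 : ∀ c, dot 1 c = c) (hdotm : ∀ g h c, dot (g * h) c = dot g (dot h c))
    (hcol1 : ∀ c, col 1 c = c) (hS : ∀ x ∈ S, ∀ a b, CocycleAt dot col x a b)
    {a : G} (ha : a ∈ Submonoid.closure S) : dot a 1 = 1 := by
  induction ha using Submonoid.closure_induction with
  | mem x hx =>
    have h := hS x hx 1 1
    rw [CocycleAt, mul_one, hcol1] at h
    exact mul_eq_left.mp h.symm
  | one => exact hdot1 1
  | mul g h _ _ hg hh => rw [hdotm, hh, hg]

theorem cocycleAt_one_left [MulOneClass G] {dot col : G → G → G} (hdot1 : ∀ c, dot 1 c = c)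
    {c : G} (hc : col c 1 = 1) (b : G) : CocycleAt dot col 1 b c := by
  rw [CocycleAt, hc, hdot1, hdot1, hdot1]

theorem cocycleAt_mul_left [Mul G] {dot col : G → G → G}
    (hdotm : ∀ g h c, dot (g * h) c = dot g (dot h c)) {x k b c : G}
    (hx : ∀ a b, CocycleAt dot col x a b) (hk : CocycleAt dot col k b c)
    (hc : CocycleAt col dot c x k) : CocycleAt dot col (x * k) b c :=
  calc dot (x * k) (b * c)
      = dot x (dot (col c k) b * dot k c) := by rw [hdotm, hk]
    _ = dot (col (dot k c) x * col c k) b * dot (x * k) c := by rw [hx, hdotm, hdotm]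
    _ = dot (col c (x * k)) b * dot (x * k) c := by rw [hc]

theorem cocycleAt_list_prod [Monoid G] {dot col : G → G → G} {S : Set G}
    (hdot1 : ∀ c, dot 1 c = c) (hdotm : ∀ g h c, dot (g * h) c = dot g (dot h c))
    (hcol1 : ∀ c, col 1 c = c) (hcolm : ∀ g h c, col (g * h) c = col g (col h c))
    (hdot_one : ∀ a, dot a 1 = 1) (hcol_one : ∀ a, col a 1 = 1)
    (hSdot : ∀ x ∈ S, ∀ a b, CocycleAt dot col x a b)
    (hScol : ∀ x ∈ S, ∀ a b, CocycleAt col dot x a b) :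
    ∀ (l m : List G) (b : G), (∀ x ∈ l, x ∈ S) → (∀ x ∈ m, x ∈ S) →
      CocycleAt dot col l.prod b m.prod ∧ CocycleAt col dot l.prod b m.prod
  | [], m, b, _, _ =>
    ⟨cocycleAt_one_left hdot1 (hcol_one _) b, cocycleAt_one_left hcol1 (hdot_one _) b⟩
  | x :: k, m, b, hl, hm => by
    have hx : x ∈ S := hl x List.mem_cons_self
    have hk : ∀ y ∈ k, y ∈ S := fun y hy => hl y (List.mem_cons_of_mem x hy)
    have ih := cocycleAt_list_prod hdot1 hdotm hcol1 hcolm hdot_one hcol_one hSdot hScol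
      k m b hk hm
    have ih_swap := cocycleAt_list_prod hdot1 hdotm hcol1 hcolm hdot_one hcol_one hSdot hScol
      m k x hm hk
    rw [List.prod_cons]
    exact ⟨cocycleAt_mul_left hdotm (hSdot x hx) ih.1 ih_swap.2,
      cocycleAt_mul_left hcolm (hScol x hx) ih.2 ih_swap.1⟩
termination_by l m => l.length + m.length

end

/-- If `·` and `:` are left actions of `G` on itself and the compatibility identities hold
with first argument in a monoid-generating set `S`, then they hold for all first arguments. -/
theorem stmt_5 {G : Type*} [Group G] (dot col : G → G → G) (S : Set G)
    (hdot1 : ∀ c, dot 1 c = c) (hdotm : ∀ g h c, dot (g * h) c = dot g (dot h c))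
    (hcol1 : ∀ c, col 1 c = c) (hcolm : ∀ g h c, col (g * h) c = col g (col h c))
    (hS : Submonoid.closure S = ⊤)
    (hSdot : ∀ x ∈ S, ∀ a b : G, dot x (a * b) = dot (col b x) a * dot x b)
    (hScol : ∀ x ∈ S, ∀ a b : G, col x (a * b) = col (dot b x) a * col x b) :
    ∀ a b c : G,
      dot a (b * c) = dot (col c a) b * dot a c ∧ col a (b * c) = col (dot c a) b * col a c := by
  have hmem (a : G) : a ∈ Submonoid.closure S := hS ▸ Submonoid.mem_top a
  have hdot_one (a : G) : dot a 1 = 1 :=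
    act_one_eq_one_of_mem_closure hdot1 hdotm hcol1 hSdot (hmem a)
  have hcol_one (a : G) : col a 1 = 1 :=
    act_one_eq_one_of_mem_closure hcol1 hcolm hdot1 hScol (hmem a)
  intro a b c
  obtain ⟨l, hl, rfl⟩ := Submonoid.exists_list_of_mem_closure (hmem a)
  obtain ⟨m, hm, rfl⟩ := Submonoid.exists_list_of_mem_closure (hmem c)
  exact cocycleAt_list_prod hdot1 hdotm hcol1 hcolm hdot_one hcol_one hSdot hScol l m b hl hm
end

section
/- Let G be a group with operations · and : satisfying: (gh)·c = g·(h·c), 1·c = c, a·(bc) = ((c:a)·b)(a·c), and similarly for :, for all elements. Suppose X generates G as a monoid and (x·b)x = (b:x)b for all x ∈ X and b ∈ G. Then for all x ∈ X and a, b ∈ G: ((ax)·b)(ax) = (a·(x·b))(ax) = ((x·b):a)(x·b)x whenever (a·c)a = (c:a)c holds for all c ∈ G; in particular the set of a ∈ G satisfying (a·b)a = (b:a)b for all b ∈ G is closed under right multiplication by elements of X. -/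
/-- Inductive step: if `(x·b)x = (b:x)b` for all `x ∈ X` and all `b`, and `a` satisfies
`(a·c)a = (c:a)c` for all `c`, then the chain of equalities
`((ax)·b)(ax) = (a·(x·b))(ax) = ((x·b):a)(x·b)x` holds and `ax` also satisfies the identity. -/
theorem stmt_10 {G : Type*} [Group G] (dot col : G → G → G) (X : Set G)
    (hdot1 : ∀ c, dot 1 c = c) (hdotm : ∀ g h c, dot (g * h) c = dot g (dot h c))
    (hcol1 : ∀ c, col 1 c = c) (hcolm : ∀ g h c, col (g * h) c = col g (col h c))
    (hcompd : ∀ a b c : G, dot a (b * c) = dot (col c a) b * dot a c)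
    (hcompc : ∀ a b c : G, col a (b * c) = col (dot c a) b * col a c)
    (hX : Submonoid.closure X = ⊤)
    (hXall : ∀ x ∈ X, ∀ b : G, dot x b * x = col b x * b) :
    ∀ x ∈ X, ∀ a : G, (∀ c : G, dot a c * a = col c a * c) →
      ∀ b : G,
        dot (a * x) b * (a * x) = dot a (dot x b) * (a * x) ∧
        dot a (dot x b) * (a * x) = col (dot x b) a * (dot x b * x) ∧
        dot (a * x) b * (a * x) = col b (a * x) * b := by
  intro x hx a ha b
  refine ⟨by rw [hdotm], ?_, ?_⟩
  · rw [← mul_assoc, ha (dot x b), mul_assoc]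
  · rw [hdotm, ← mul_assoc, ha (dot x b), mul_assoc, hXall x hx b, hcompc b a x, mul_assoc]
end
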